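/- arXiv:2302.12934 — 2 statements merged into one kernel-verified Lean document; each statement's English description precedes it below -/
import Mathlib

section
/- Let Λ ⊆ [0,1]^d be the attractor of an IFS of injective contractions, non-degenerated in the sense that Λ is not contained in the boundary ∂[0,1]^d's faces, and suppose there exists δ > 0 and a δ-connected component X of Λ with X ∩ ∂[0,1]^d = ∅. Then Λ admits an island, i.e., a nonempty subset F of Λ that is both open and closed in Λ and satisfies F ∩ ∂[0,1]^d = ∅. -/
/-- Ambient `δ`-chain relation: `x` and `y` are joined by a chain of points of `Λ`
with consecutive distances `≤ δ`. -/
def aRel {X : Type*} [PseudoMetricSpace X] (Λ : Set X) (δ : ℝ) (x y : X) : Prop :=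
  Relation.ReflTransGen (fun a b : X => a ∈ Λ ∧ b ∈ Λ ∧ dist a b ≤ δ) x y

/-- `C` is a `δ`-connected component of `Λ`. -/
def IsDeltaComp {X : Type*} [PseudoMetricSpace X] (Λ : Set X) (δ : ℝ) (C : Set X) : Prop :=
  ∃ x ∈ Λ, C = {y | y ∈ Λ ∧ aRel Λ δ x y}

/-!
A `δ`-connected component `X` of `Λ` is already an island: a point of `Λ` within `δ` of a point
of `X` is chained to it, so `X` and `Λ \ X` are both unions of `δ`-balls relative to `Λ`.
-/

theorem Metric.isClopen_of_mem_of_dist_lt {α : Type*} [PseudoMetricSpace α] {s : Set α} {ε : ℝ}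
    (hε : 0 < ε) (hs : ∀ x y, x ∈ s → dist x y < ε → y ∈ s) : IsClopen s := by
  refine ⟨⟨Metric.isOpen_iff.2 fun y hy => ⟨ε, hε, fun z hz hzs => hy ?_⟩⟩,
    Metric.isOpen_iff.2 fun x hx => ⟨ε, hε, fun y hy => hs x y hx ?_⟩⟩
  · exact hs z y hzs (Metric.mem_ball.1 hz)
  · rw [dist_comm]; exact Metric.mem_ball.1 hy

namespace IsDeltaComp

variable {α : Type*} [PseudoMetricSpace α] {Λ X : Set α} {δ : ℝ}

theorem nonempty (hX : IsDeltaComp Λ δ X) : X.Nonempty := by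
  obtain ⟨x, hx, rfl⟩ := hX
  exact ⟨x, hx, .refl⟩

theorem subset (hX : IsDeltaComp Λ δ X) : X ⊆ Λ := by
  obtain ⟨x, -, rfl⟩ := hX
  exact fun _ hy => hy.1

theorem isClopen_preimage_val (hX : IsDeltaComp Λ δ X) (hδ : 0 < δ) :
    IsClopen (Subtype.val ⁻¹' X : Set Λ) := by
  obtain ⟨x, -, rfl⟩ := hX
  refine Metric.isClopen_of_mem_of_dist_lt hδ fun y z hy hyz => ⟨z.2, ?_⟩
  exact hy.2.tail ⟨y.2, z.2, hyz.le⟩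

end IsDeltaComp

theorem island_of_component_avoiding_boundary_general {d : ℕ}
    (Λ : Set (Fin d → ℝ))
    (δ : ℝ) (hδ : 0 < δ) (X : Set (Fin d → ℝ))
    (hX : IsDeltaComp Λ δ X)
    (hXb : X ∩ frontier (Set.Icc (0 : Fin d → ℝ) 1) = ∅) :
    ∃ F : Set (Fin d → ℝ), F.Nonempty ∧ F ⊆ Λ ∧
      IsClopen (Subtype.val ⁻¹' F : Set Λ) ∧
      F ∩ frontier (Set.Icc (0 : Fin d → ℝ) 1) = ∅ :=
  ⟨X, hX.nonempty, hX.subset, hX.isClopen_preimage_val hδ, hXb⟩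

theorem island_of_component_avoiding_boundary {d : ℕ} {D : Type*} [Fintype D]
    (φ : D → (Fin d → ℝ) → (Fin d → ℝ))
    (r : D → NNReal) (hr : ∀ a, r a < 1) (hlip : ∀ a, LipschitzWith (r a) (φ a))
    (hinj : ∀ a, Function.Injective (φ a))
    (Λ : Set (Fin d → ℝ)) (hΛc : IsCompact Λ) (hΛne : Λ.Nonempty)
    (hattr : Λ = ⋃ a, φ a '' Λ)
    (hΛcube : Λ ⊆ Set.Icc (0 : Fin d → ℝ) 1)
    (hnondeg : ¬ Λ ⊆ frontier (Set.Icc (0 : Fin d → ℝ) 1))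
    (δ : ℝ) (hδ : 0 < δ) (X : Set (Fin d → ℝ))
    (hX : IsDeltaComp Λ δ X)
    (hXb : X ∩ frontier (Set.Icc (0 : Fin d → ℝ) 1) = ∅) :
    ∃ F : Set (Fin d → ℝ), F.Nonempty ∧ F ⊆ Λ ∧
      IsClopen (Subtype.val ⁻¹' F : Set Λ) ∧
      F ∩ frontier (Set.Icc (0 : Fin d → ℝ) 1) = ∅ :=
  island_of_component_avoiding_boundary_general Λ δ hδ X hX hXb
end

section
/- Let H ⊆ ℝ^d be a set contained in a product of intervals so that the d-th coordinate of H has diameter at most δ/2 (more generally, suppose for all x,y ∈ H, |x−y|² ≤ |π(x)−π(y)|² + (δ/2)², where π : ℝ^d → ℝ^{d−1} is the projection forgetting the last coordinate). Then for any 0 < ε ≤ δ/2 with ε² + (δ/2)² ≤ δ², if π(x) and π(y) lie in the same ε-connected component of π(H), then x and y lie in the same δ-connected component of H; consequently h_H(δ) ≤ h_{π(H)}(ε). -/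
/-!
A step of length at most `ε` between two points of `π '' H` lifts to a step of length at most `δ`
between any of their preimages in `H`, since by the thinness assumption
`dist x y ^ 2 ≤ ε ^ 2 + (δ / 2) ^ 2 ≤ δ ^ 2`. Hence `ε`-chains in `π '' H` lift to `δ`-chains
in `H`, and choosing a preimage of each point of `π '' H` gives a surjection from the
`ε`-components of `π '' H` onto the `δ`-components of `H`.
-/

/-- Two points of `E` are connected by a `δ`-chain within `E`. -/
def chainRel {X : Type*} [PseudoMetricSpace X] (E : Set X) (δ : ℝ) (x y : E) : Prop :=
  Relation.ReflTransGen (fun a b : E => dist (a : X) (b : X) ≤ δ) x y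

/-- The number (cardinality) of `δ`-connected components of `E`. -/
noncomputable def hComp {X : Type*} [PseudoMetricSpace X] (E : Set X) (δ : ℝ) : Cardinal :=
  Cardinal.mk (Quot (chainRel E δ))

section

variable {X Y : Type*} [PseudoMetricSpace X] [PseudoMetricSpace Y] {f : X → Y} {H : Set X}
  {δ ε : ℝ}

lemma dist_le_of_dist_image_le (hδ : 0 ≤ δ) (hpyth : ε ^ 2 + (δ / 2) ^ 2 ≤ δ ^ 2)
    (hthin : ∀ x ∈ H, ∀ y ∈ H, dist x y ^ 2 ≤ dist (f x) (f y) ^ 2 + (δ / 2) ^ 2) :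
    ∀ x ∈ H, ∀ y ∈ H, dist (f x) (f y) ≤ ε → dist x y ≤ δ := by
  intro x hx y hy hxy
  refine (pow_le_pow_iff_left₀ dist_nonneg hδ two_ne_zero).mp ?_
  calc dist x y ^ 2 ≤ dist (f x) (f y) ^ 2 + (δ / 2) ^ 2 := hthin x hx y hy
    _ ≤ ε ^ 2 + (δ / 2) ^ 2 := by gcongr
    _ ≤ δ ^ 2 := hpyth

lemma chainRel_of_chainRel_image (hε : 0 ≤ ε)
    (hf : ∀ x ∈ H, ∀ y ∈ H, dist (f x) (f y) ≤ ε → dist x y ≤ δ)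
    {p q : f '' H} (hpq : chainRel (f '' H) ε p q) {x y : H} (hx : f x = p) (hy : f y = q) :
    chainRel H δ x y := by
  induction hpq generalizing y with
  | refl =>
    refine .single (hf x x.2 y y.2 ?_)
    rwa [hx, hy, dist_self]
  | @tail c q _ hcq ih =>
    obtain ⟨z, hz, hzc⟩ := c.2
    exact .tail (ih (y := ⟨z, hz⟩) hzc) (hf z hz y y.2 (by rwa [hzc, hy]))

end

lemma hComp_le_hComp_image {X Y : Type u} [PseudoMetricSpace X] [PseudoMetricSpace Y]
    {f : X → Y} {H : Set X} {δ ε : ℝ} (hε : 0 ≤ ε)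
    (hf : ∀ x ∈ H, ∀ y ∈ H, dist (f x) (f y) ≤ ε → dist x y ≤ δ) :
    hComp H δ ≤ hComp (f '' H) ε := by
  have hsurj := Set.imageFactorization_surjective (f := f) (s := H)
  set s := Function.surjInv hsurj
  have hs (p : f '' H) : f (s p) = p :=
    congrArg Subtype.val (Function.surjInv_eq hsurj p)
  refine Cardinal.mk_le_of_surjective
    (f := Quot.lift (fun p => Quot.mk (chainRel H δ) (s p))
      fun p q hpq => Quot.sound (chainRel_of_chainRel_image hε hf hpq (hs p) (hs q))) ?_
  rintro ⟨x⟩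
  exact ⟨Quot.mk _ (Set.imageFactorization f H x),
    Quot.sound (chainRel_of_chainRel_image hε hf .refl (hs _) rfl)⟩

theorem hComp_le_of_thin_fiber {X Y : Type u} [PseudoMetricSpace X] [PseudoMetricSpace Y]
    (π : X → Y) (H : Set X) (δ ε : ℝ)
    (hthin : ∀ x ∈ H, ∀ y ∈ H, dist x y ^ 2 ≤ dist (π x) (π y) ^ 2 + (δ / 2) ^ 2)
    (hε0 : 0 < ε) (hεδ : ε ≤ δ / 2) (hpyth : ε ^ 2 + (δ / 2) ^ 2 ≤ δ ^ 2) :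
    (∀ x y : H,
        chainRel (π '' H) ε ⟨π x, Set.mem_image_of_mem π x.2⟩
          ⟨π y, Set.mem_image_of_mem π y.2⟩ →
        chainRel H δ x y) ∧
    hComp H δ ≤ hComp (π '' H) ε := by
  have hlift := dist_le_of_dist_image_le (by linarith) hpyth hthin
  exact ⟨fun x y hxy => chainRel_of_chainRel_image hε0.le hlift hxy rfl rfl,
    hComp_le_hComp_image hε0.le hlift⟩
end
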